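/- Let n be a nonnegative integer and δ, γ real numbers with γ ≠ 0. Then for every twice continuously differentiable function y : ℝ → ℝ and every z ∈ ℝ, z(z² − 1)·y″(z) + (δ z² − 1/γ)·y′(z) − n(n−1+δ)·z·y(z) = −(J⁺J⁰y)(z) − (J⁰J⁻y)(z) − ((3n−2)/2 + δ)·(J⁺y)(z) − (1/γ + n/2)·(J⁻y)(z). -/

import Mathlib

/-- `(J⁺y)(x) = -x²y'(x) + n x y(x)` -/
noncomputable def Jp (n : ℕ) (y : ℝ → ℝ) : ℝ → ℝ :=
  fun x => -x ^ 2 * deriv y x + (n : ℝ) * x * y x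

/-- `(J⁰y)(x) = x y'(x) - (n/2) y(x)` -/
noncomputable def J0 (n : ℕ) (y : ℝ → ℝ) : ℝ → ℝ :=
  fun x => x * deriv y x - ((n : ℝ) / 2) * y x

/-- `(J⁻y)(x) = y'(x)` -/
noncomputable def Jm (y : ℝ → ℝ) : ℝ → ℝ := fun x => deriv y x

/-! Both sides are second-order operators in `y`; once `(J⁰y)'` is expanded by the product rule,
the identity is a comparison of the coefficients of `y''`, `y'` and `y`, which are polynomials
in `z`. -/

section SL2Operators

variable {n : ℕ} {y : ℝ → ℝ} {x : ℝ}

theorem deriv_J0 (hy : DifferentiableAt ℝ y x) (hy' : DifferentiableAt ℝ (deriv y) x) :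
    deriv (J0 n y) x = (1 - (n : ℝ) / 2) * deriv y x + x * deriv (deriv y) x := by
  have h : HasDerivAt (J0 n y) (1 * deriv y x + x * deriv (deriv y) x
      - (n : ℝ) / 2 * deriv y x) x :=
    ((hasDerivAt_id x).mul hy'.hasDerivAt).sub (hy.hasDerivAt.const_mul _)
  rw [h.deriv]
  ring

theorem Jp_J0_apply (hy : DifferentiableAt ℝ y x) (hy' : DifferentiableAt ℝ (deriv y) x) :
    Jp n (J0 n y) x = -x ^ 3 * deriv (deriv y) x + (3 * (n : ℝ) / 2 - 1) * x ^ 2 * deriv y x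
      - (n : ℝ) ^ 2 / 2 * x * y x := by
  simp only [Jp, deriv_J0 hy hy', J0]
  ring

theorem J0_Jm_apply : J0 n (Jm y) x = x * deriv (deriv y) x - (n : ℝ) / 2 * deriv y x := rfl

end SL2Operators

theorem electrons_on_sphere_sl2_general (n : ℕ) (δ γ : ℝ)
    (y : ℝ → ℝ) (hy : ContDiff ℝ 2 y) (z : ℝ) :
    z * (z ^ 2 - 1) * deriv (deriv y) z + (δ * z ^ 2 - 1 / γ) * deriv y z
      - (n : ℝ) * ((n : ℝ) - 1 + δ) * z * y z
    = -Jp n (J0 n y) z - J0 n (Jm y) z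
      - ((3 * (n : ℝ) - 2) / 2 + δ) * Jp n y z
      - (1 / γ + (n : ℝ) / 2) * Jm y z := by
  rw [Jp_J0_apply (hy.differentiable two_ne_zero z) (hy.differentiable_deriv_two z),
    J0_Jm_apply]
  simp only [Jp, Jm]
  ring

/-- sl(2) algebraization of the Stäckel-transformed Hamiltonian of two
Coulombically repelling electrons on a sphere:
`𝓗' = -J⁺J⁰ - J⁰J⁻ - ((3n-2)/2 + δ)J⁺ - (1/γ + n/2)J⁻`. -/
theorem electrons_on_sphere_sl2 (n : ℕ) (δ γ : ℝ) (hγ : γ ≠ 0)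
    (y : ℝ → ℝ) (hy : ContDiff ℝ 2 y) (z : ℝ) :
    z * (z ^ 2 - 1) * deriv (deriv y) z + (δ * z ^ 2 - 1 / γ) * deriv y z
      - (n : ℝ) * ((n : ℝ) - 1 + δ) * z * y z
    = -Jp n (J0 n y) z - J0 n (Jm y) z
      - ((3 * (n : ℝ) - 2) / 2 + δ) * Jp n y z
      - (1 / γ + (n : ℝ) / 2) * Jm y z :=
  electrons_on_sphere_sl2_general n δ γ y hy z
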